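/- arXiv:2108.03213 — 2 statements merged into one kernel-verified Lean document; each statement's English description precedes it below -/
import Mathlib

section
/- Let S and O be finite nonempty sets and let (r₁,p₁) and (r₂,p₂) be two SMDP models over (S,O) (rewards rᵢ : S × O → ℝ, nonnegative kernels pᵢ : S × O × S → ℝ) with γ̄₂ := max_{s,o} ∑_{s'} p₂(s,o,s') < 1. Let π : S → O be a deterministic policy and let V₁ and V₂ satisfy the policy-evaluation equations Vᵢ(s) = rᵢ(s,π(s)) + ∑_{s'} pᵢ(s,π(s),s') · Vᵢ(s') for all s (i = 1, 2). Then ‖V₁ − V₂‖_∞ ≤ (1 − γ̄₂)⁻¹ · ( ‖r₁ − r₂‖_∞ + κ · ‖V₁‖_∞ ), where κ := max_{s,o} ∑_{s'} |p₁(s,o,s') − p₂(s,o,s')|. -/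
/-!
With `Pᵢ s s' = pᵢ s (π s) s'`, subtracting the two Bellman equations gives the perturbation
identity `V₁ - V₂ = (r₁ - r₂) + (P₁ - P₂) V₁ + P₂ (V₁ - V₂)`. In the sup norm the middle term is at most
`κ ‖V₁‖` and the last at most `γ̄₂ ‖V₁ - V₂‖`, so `‖V₁ - V₂‖ ≤ ‖r₁ - r₂‖ + κ ‖V₁‖ + γ̄₂ ‖V₁ - V₂‖`,
which rearranges to the claim since `γ̄₂ < 1`.
-/

open Finset

noncomputable def fmax {α : Type*} [Fintype α] [Nonempty α] (f : α → ℝ) : ℝ :=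
  Finset.univ.sup' Finset.univ_nonempty f

section fmax

variable {α : Type*} [Fintype α] [Nonempty α]

lemma le_fmax (f : α → ℝ) (a : α) : f a ≤ fmax f :=
  le_sup' f (mem_univ a)

lemma fmax_le {f : α → ℝ} {c : ℝ} (h : ∀ a, f a ≤ c) : fmax f ≤ c :=
  sup'_le _ _ fun a _ => h a

lemma fmax_abs_nonneg (f : α → ℝ) : 0 ≤ fmax fun a => |f a| :=
  (abs_nonneg (f _)).trans (le_fmax (fun a => |f a|) (Classical.arbitrary α))

lemma abs_sum_mul_le_sum_abs_mul_fmax (w f : α → ℝ) :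
    |∑ a, w a * f a| ≤ (∑ a, |w a|) * fmax fun a => |f a| :=
  calc |∑ a, w a * f a| ≤ ∑ a, |w a| * |f a| :=
        (abs_sum_le_sum_abs _ _).trans_eq (sum_congr rfl fun _ _ => abs_mul _ _)
    _ ≤ ∑ a, |w a| * fmax fun a => |f a| :=
        sum_le_sum fun a _ => mul_le_mul_of_nonneg_left (le_fmax (fun a => |f a|) a) (abs_nonneg _)
    _ = (∑ a, |w a|) * fmax fun a => |f a| := (sum_mul _ _ _).symm

end fmax

lemma le_inv_one_sub_mul_of_le_add_mul {d a γ : ℝ} (hγ : γ < 1) (h : d ≤ a + γ * d) :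
    d ≤ (1 - γ)⁻¹ * a := by
  rw [inv_mul_eq_div, le_div_iff₀ (by linarith)]
  linarith

section BellmanPerturbation

variable {S : Type*} [Fintype S] {c₁ c₂ V₁ V₂ : S → ℝ} {P₁ P₂ : S → S → ℝ}

lemma sub_eq_of_bellman (hV₁ : ∀ s, V₁ s = c₁ s + ∑ s', P₁ s s' * V₁ s')
    (hV₂ : ∀ s, V₂ s = c₂ s + ∑ s', P₂ s s' * V₂ s') (s : S) :
    V₁ s - V₂ s = (c₁ s - c₂ s) + ∑ s', (P₁ s s' - P₂ s s') * V₁ s' +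
      ∑ s', P₂ s s' * (V₁ s' - V₂ s') := by
  rw [hV₁ s, hV₂ s, add_assoc, ← sum_add_distrib]
  simp only [sub_mul, mul_sub, sub_add_sub_cancel, sum_sub_distrib]
  ring

lemma abs_sub_le_of_bellman [Nonempty S] (hP₂ : ∀ s s', 0 ≤ P₂ s s')
    (hV₁ : ∀ s, V₁ s = c₁ s + ∑ s', P₁ s s' * V₁ s')
    (hV₂ : ∀ s, V₂ s = c₂ s + ∑ s', P₂ s s' * V₂ s') (s : S) :
    |V₁ s - V₂ s| ≤ |c₁ s - c₂ s| + (∑ s', |P₁ s s' - P₂ s s'|) * (fmax fun s => |V₁ s|) +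
      (∑ s', P₂ s s') * fmax fun s => |V₁ s - V₂ s| := by
  have hP₂_abs : ∑ s', |P₂ s s'| = ∑ s', P₂ s s' :=
    sum_congr rfl fun s' _ => abs_of_nonneg (hP₂ s s')
  rw [sub_eq_of_bellman hV₁ hV₂ s, ← hP₂_abs]
  refine (abs_add_le _ _).trans (add_le_add ((abs_add_le _ _).trans (add_le_add le_rfl ?_)) ?_) <;>
    exact abs_sum_mul_le_sum_abs_mul_fmax _ _

theorem fmax_abs_sub_le_of_bellman [Nonempty S] {ε κ γ : ℝ} (hP₂ : ∀ s s', 0 ≤ P₂ s s')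
    (hγ : ∀ s, ∑ s', P₂ s s' ≤ γ) (hγ_lt : γ < 1)
    (hc : ∀ s, |c₁ s - c₂ s| ≤ ε) (hκ : ∀ s, ∑ s', |P₁ s s' - P₂ s s'| ≤ κ)
    (hV₁ : ∀ s, V₁ s = c₁ s + ∑ s', P₁ s s' * V₁ s')
    (hV₂ : ∀ s, V₂ s = c₂ s + ∑ s', P₂ s s' * V₂ s') :
    (fmax fun s => |V₁ s - V₂ s|) ≤ (1 - γ)⁻¹ * (ε + κ * fmax fun s => |V₁ s|) := by
  refine le_inv_one_sub_mul_of_le_add_mul hγ_lt (fmax_le fun s => ?_)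
  have hV₁_nonneg := fmax_abs_nonneg fun s => V₁ s
  have hgap_nonneg := fmax_abs_nonneg fun s => V₁ s - V₂ s
  calc |V₁ s - V₂ s|
      ≤ |c₁ s - c₂ s| + (∑ s', |P₁ s s' - P₂ s s'|) * (fmax fun s => |V₁ s|) +
          (∑ s', P₂ s s') * fmax fun s => |V₁ s - V₂ s| := abs_sub_le_of_bellman hP₂ hV₁ hV₂ s
    _ ≤ ε + κ * (fmax fun s => |V₁ s|) + γ * fmax fun s => |V₁ s - V₂ s| := by
        gcongr
        exacts [hc s, hκ s, hγ s]

end BellmanPerturbation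

theorem policy_evaluation_gap_bound_general {S O : Type*} [Fintype S] [Fintype O] [Nonempty S] [Nonempty O]
    (r₁ r₂ : S → O → ℝ) (p₁ p₂ : S → O → S → ℝ) (γbar₂ κ : ℝ)
    (hp₂ : ∀ s o s', 0 ≤ p₂ s o s')
    (hγ₂ : γbar₂ = fmax (fun so : S × O => ∑ s' : S, p₂ so.1 so.2 s'))
    (hγ₂lt : γbar₂ < 1)
    (hκ : κ = fmax (fun so : S × O => ∑ s' : S, |p₁ so.1 so.2 s' - p₂ so.1 so.2 s'|))
    (π : S → O) (V₁ V₂ : S → ℝ)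
    (hV₁ : ∀ s, V₁ s = r₁ s (π s) + ∑ s' : S, p₁ s (π s) s' * V₁ s')
    (hV₂ : ∀ s, V₂ s = r₂ s (π s) + ∑ s' : S, p₂ s (π s) s' * V₂ s') :
    fmax (fun s : S => |V₁ s - V₂ s|) ≤
      (1 - γbar₂)⁻¹ *
        (fmax (fun so : S × O => |r₁ so.1 so.2 - r₂ so.1 so.2|) +
          κ * fmax (fun s : S => |V₁ s|)) := by
  subst hγ₂ hκ
  exact fmax_abs_sub_le_of_bellman (fun s => hp₂ s (π s))
    (fun s => le_fmax (fun so : S × O => ∑ s', p₂ so.1 so.2 s') (s, π s)) hγ₂lt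
    (fun s => le_fmax (fun so : S × O => |r₁ so.1 so.2 - r₂ so.1 so.2|) (s, π s))
    (fun s => le_fmax (fun so : S × O => ∑ s', |p₁ so.1 so.2 s' - p₂ so.1 so.2 s'|) (s, π s))
    hV₁ hV₂

/-- Term-2 bound in the proof of Theorem 1 (Lemma 5): evaluating the same policy in
two SMDP models gives values differing by at most the stated combination of reward
error and total-variation transition error. -/
theorem policy_evaluation_gap_bound {S O : Type*} [Fintype S] [Fintype O] [Nonempty S] [Nonempty O]
    (r₁ r₂ : S → O → ℝ) (p₁ p₂ : S → O → S → ℝ) (γbar₂ κ : ℝ)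
    (hp₁ : ∀ s o s', 0 ≤ p₁ s o s') (hp₂ : ∀ s o s', 0 ≤ p₂ s o s')
    (hγ₂ : γbar₂ = fmax (fun so : S × O => ∑ s' : S, p₂ so.1 so.2 s'))
    (hγ₂lt : γbar₂ < 1)
    (hκ : κ = fmax (fun so : S × O => ∑ s' : S, |p₁ so.1 so.2 s' - p₂ so.1 so.2 s'|))
    (π : S → O) (V₁ V₂ : S → ℝ)
    (hV₁ : ∀ s, V₁ s = r₁ s (π s) + ∑ s' : S, p₁ s (π s) s' * V₁ s')
    (hV₂ : ∀ s, V₂ s = r₂ s (π s) + ∑ s' : S, p₂ s (π s) s' * V₂ s') :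
    fmax (fun s : S => |V₁ s - V₂ s|) ≤
      (1 - γbar₂)⁻¹ *
        (fmax (fun so : S × O => |r₁ so.1 so.2 - r₂ so.1 so.2|) +
          κ * fmax (fun s : S => |V₁ s|)) :=
  policy_evaluation_gap_bound_general r₁ r₂ p₁ p₂ γbar₂ κ hp₂ hγ₂ hγ₂lt hκ π V₁ V₂ hV₁ hV₂
end

section
/- Let S and O be finite nonempty sets. Let M = (r,p) and M_I = (r_I,p_I) be two SMDP models over (S,O) with 0 ≤ r(s,o) ≤ Rmax for all (s,o), γ̄ := max_{s,o} ∑_{s'} p(s,o,s') < 1, γ̄_I := max_{s,o} ∑_{s'} p_I(s,o,s') < 1, ‖r − r_I‖_∞ ≤ ζ_R, and max_{s,o} ∑_{s'} |p(s,o,s') − p_I(s,o,s')| ≤ ζ_P. Let Q* and Q*_I be Bellman-optimal value functions for M and M_I respectively, let π_I : S → O be greedy with respect to Q*_I (i.e. Q*_I(s, π_I(s)) = max_o Q*_I(s,o) for all s), let V^{π_I} be the value of π_I in M, and let V*(s) = max_o Q*(s,o). Then ‖V^{π_I} − V*‖_∞ ≤ 2ζ_R/(1 − γ̄_I) + 2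 Rmax ζ_P / ((1 − γ̄_I)(1 − γ̄)). -/
open Finset

section Fmax

variable {α : Type*} [Fintype α] [Nonempty α]

lemma fmax_le_iff {f : α → ℝ} {c : ℝ} : fmax f ≤ c ↔ ∀ a, f a ≤ c := by
  simp [fmax, Finset.sup'_le_iff]

lemma abs_fmax_le_norm (f : α → ℝ) : |fmax f| ≤ ‖f‖ := by
  obtain ⟨a⟩ := ‹Nonempty α›
  have hf : ∀ a, |f a| ≤ ‖f‖ := norm_le_pi_norm f
  refine abs_le.2 ⟨?_, fmax_le_iff.2 fun a => (le_abs_self _).trans (hf a)⟩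
  linarith [neg_abs_le (f a), le_fmax f a, hf a]

lemma fmax_le_fmax_add_norm_sub (f g : α → ℝ) : fmax f ≤ fmax g + ‖f - g‖ :=
  fmax_le_iff.2 fun a => by
    have hfg : |f a - g a| ≤ ‖f - g‖ := norm_le_pi_norm (f - g) a
    linarith [le_abs_self (f a - g a), le_fmax g a]

lemma abs_fmax_sub_fmax_le (f g : α → ℝ) : |fmax f - fmax g| ≤ ‖f - g‖ :=
  abs_sub_le_iff.2
    ⟨by linarith [fmax_le_fmax_add_norm_sub f g],
     by linarith [fmax_le_fmax_add_norm_sub g f, norm_sub_rev f g]⟩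

end Fmax

lemma pi_norm_le_div_one_sub {ι E : Type*} [Fintype ι] [Nonempty ι] [SeminormedAddCommGroup E]
    {V : ι → E} {c γ : ℝ} (hγ : γ < 1) (h : ∀ i, ‖V i‖ ≤ c + γ * ‖V‖) :
    ‖V‖ ≤ c / (1 - γ) := by
  have hV := (pi_norm_le_iff_of_nonempty V).2 h
  rw [le_div_iff₀ (by linarith)]
  linarith

section Sums

variable {S : Type*} [Fintype S]

lemma abs_sum_mul_le (q V : S → ℝ) : |∑ s, q s * V s| ≤ (∑ s, |q s|) * ‖V‖ :=
  calc |∑ s, q s * V s| ≤ ∑ s, |q s * V s| := abs_sum_le_sum_abs _ _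
    _ ≤ ∑ s, |q s| * ‖V‖ := sum_le_sum fun s _ => by
        rw [abs_mul]
        exact mul_le_mul_of_nonneg_left (norm_le_pi_norm V s) (abs_nonneg _)
    _ = (∑ s, |q s|) * ‖V‖ := (sum_mul _ _ _).symm

lemma abs_sum_mul_le_of_nonneg {q : S → ℝ} (hq : ∀ s, 0 ≤ q s) (V : S → ℝ) :
    |∑ s, q s * V s| ≤ (∑ s, q s) * ‖V‖ := by
  simpa only [abs_of_nonneg (hq _)] using abs_sum_mul_le q V

end Sums

section SMDP

variable {S O : Type*} [Fintype S]

def backup (r : S → O → ℝ) (p : S → O → S → ℝ) (V : S → ℝ) (s : S) (o : O) : ℝ :=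
  r s o + ∑ s', p s o s' * V s'

noncomputable def stateValue [Fintype O] [Nonempty O] (Q : S → O → ℝ) (s : S) : ℝ :=
  fmax (Q s)

lemma norm_sub_stateValue_le [Fintype O] [Nonempty O] (Q Q' : S → O → ℝ) :
    ‖stateValue Q - stateValue Q'‖ ≤ ‖Q - Q'‖ :=
  (pi_norm_le_iff_of_nonneg (norm_nonneg _)).2 fun s =>
    (abs_fmax_sub_fmax_le (Q s) (Q' s)).trans (norm_le_pi_norm (Q - Q') s)

variable {r rI : S → O → ℝ} {p pI : S → O → S → ℝ}

lemma abs_backup_le {Rmax γ : ℝ} (hr : ∀ s o, |r s o| ≤ Rmax) (hp : ∀ s o s', 0 ≤ p s o s')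
    (hpγ : ∀ s o, ∑ s', p s o s' ≤ γ) (V : S → ℝ) (s : S) (o : O) :
    |backup r p V s o| ≤ Rmax + γ * ‖V‖ :=
  calc |backup r p V s o| ≤ |r s o| + |∑ s', p s o s' * V s'| := abs_add_le _ _
    _ ≤ Rmax + (∑ s', p s o s') * ‖V‖ :=
        add_le_add (hr s o) (abs_sum_mul_le_of_nonneg (hp s o) V)
    _ ≤ Rmax + γ * ‖V‖ := by gcongr; exact hpγ s o

lemma abs_backup_sub_backup_le {ζR ζP γI B D : ℝ} (hrζ : ∀ s o, |r s o - rI s o| ≤ ζR)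
    (hpζ : ∀ s o, ∑ s', |p s o s' - pI s o s'| ≤ ζP) (hpI : ∀ s o s', 0 ≤ pI s o s')
    (hpIγ : ∀ s o, ∑ s', pI s o s' ≤ γI) {V W : S → ℝ} (hV : ‖V‖ ≤ B) (hVW : ‖V - W‖ ≤ D)
    (s : S) (o : O) :
    |backup r p V s o - backup rI pI W s o| ≤ ζR + ζP * B + γI * D := by
  have hsplit : backup r p V s o - backup rI pI W s o = (r s o - rI s o)
      + ∑ s', (p s o s' - pI s o s') * V s' + ∑ s', pI s o s' * (V - W) s' := by
    simp only [backup, Pi.sub_apply, sub_mul, mul_sub, sum_sub_distrib]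
    ring
  have hζP : 0 ≤ ζP := (sum_nonneg fun _ _ => abs_nonneg _).trans (hpζ s o)
  have hγI : 0 ≤ γI := (sum_nonneg fun s' _ => hpI s o s').trans (hpIγ s o)
  rw [hsplit]
  calc _ ≤ |r s o - rI s o| + |∑ s', (p s o s' - pI s o s') * V s'|
          + |∑ s', pI s o s' * (V - W) s'| := abs_add_three _ _ _
    _ ≤ ζR + (∑ s', |p s o s' - pI s o s'|) * ‖V‖ + (∑ s', pI s o s') * ‖V - W‖ :=
        add_le_add_three (hrζ s o) (abs_sum_mul_le _ V) (abs_sum_mul_le_of_nonneg (hpI s o) _)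
    _ ≤ ζR + ζP * B + γI * D :=
        add_le_add_three le_rfl (mul_le_mul (hpζ s o) hV (norm_nonneg _) hζP)
          (mul_le_mul (hpIγ s o) hVW (norm_nonneg _) hγI)

variable [Nonempty S]

lemma norm_policyValue_le {Rmax γ : ℝ} (hr : ∀ s o, |r s o| ≤ Rmax)
    (hp : ∀ s o s', 0 ≤ p s o s') (hpγ : ∀ s o, ∑ s', p s o s' ≤ γ) (hγ : γ < 1)
    {π : S → O} {V : S → ℝ} (hV : ∀ s, V s = backup r p V s (π s)) :
    ‖V‖ ≤ Rmax / (1 - γ) :=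
  pi_norm_le_div_one_sub hγ fun s => by
    rw [Real.norm_eq_abs, hV]
    exact abs_backup_le hr hp hpγ V s (π s)

variable [Fintype O] [Nonempty O]

lemma norm_stateValue_le {Rmax γ : ℝ} (hr : ∀ s o, |r s o| ≤ Rmax)
    (hp : ∀ s o s', 0 ≤ p s o s') (hpγ : ∀ s o, ∑ s', p s o s' ≤ γ) (hγ : γ < 1)
    {Q : S → O → ℝ} (hQ : ∀ s o, Q s o = backup r p (stateValue Q) s o) :
    ‖stateValue Q‖ ≤ Rmax / (1 - γ) :=
  pi_norm_le_div_one_sub hγ fun s => (abs_fmax_le_norm (Q s)).trans <|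
    (pi_norm_le_iff_of_nonempty _).2 fun o => by
      rw [Real.norm_eq_abs, hQ]
      exact abs_backup_le hr hp hpγ _ s o

lemma norm_sub_optimalQ_le {ζR ζP γI B : ℝ} (hrζ : ∀ s o, |r s o - rI s o| ≤ ζR)
    (hpζ : ∀ s o, ∑ s', |p s o s' - pI s o s'| ≤ ζP) (hpI : ∀ s o s', 0 ≤ pI s o s')
    (hpIγ : ∀ s o, ∑ s', pI s o s' ≤ γI) (hγI : γI < 1) {Q QI : S → O → ℝ}
    (hQ : ∀ s o, Q s o = backup r p (stateValue Q) s o)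
    (hQI : ∀ s o, QI s o = backup rI pI (stateValue QI) s o) (hB : ‖stateValue Q‖ ≤ B) :
    ‖Q - QI‖ ≤ (ζR + ζP * B) / (1 - γI) :=
  pi_norm_le_div_one_sub hγI fun s => (pi_norm_le_iff_of_nonempty _).2 fun o => by
    rw [Real.norm_eq_abs, Pi.sub_apply, Pi.sub_apply, hQ, hQI]
    exact abs_backup_sub_backup_le hrζ hpζ hpI hpIγ hB (norm_sub_stateValue_le Q QI) s o

lemma norm_policyValue_sub_stateValue_le {ζR ζP γI B : ℝ}
    (hrζ : ∀ s o, |r s o - rI s o| ≤ ζR) (hpζ : ∀ s o, ∑ s', |p s o s' - pI s o s'| ≤ ζP)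
    (hpI : ∀ s o s', 0 ≤ pI s o s') (hpIγ : ∀ s o, ∑ s', pI s o s' ≤ γI) (hγI : γI < 1)
    {QI : S → O → ℝ} (hQI : ∀ s o, QI s o = backup rI pI (stateValue QI) s o)
    {π : S → O} (hπ : ∀ s, QI s (π s) = stateValue QI s)
    {V : S → ℝ} (hV : ∀ s, V s = backup r p V s (π s)) (hB : ‖V‖ ≤ B) :
    ‖V - stateValue QI‖ ≤ (ζR + ζP * B) / (1 - γI) :=
  pi_norm_le_div_one_sub hγI fun s => by
    rw [Real.norm_eq_abs, Pi.sub_apply, ← hπ, hV, hQI]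
    exact abs_backup_sub_backup_le hrζ hpζ hpI hpIγ hB le_rfl s (π s)

end SMDP

/-- Theorem 1 (trajectory-based value-loss bound, kernel form): the value loss of the
policy optimal for the intent-induced SMDP when executed in the true SMDP. -/
theorem value_loss_bound {S O : Type*} [Fintype S] [Fintype O] [Nonempty S] [Nonempty O]
    (r rI : S → O → ℝ) (p pI : S → O → S → ℝ)
    (Rmax γbar γbarI ζR ζP : ℝ)
    (hr0 : ∀ s o, 0 ≤ r s o) (hrR : ∀ s o, r s o ≤ Rmax)
    (hp : ∀ s o s', 0 ≤ p s o s') (hpI : ∀ s o s', 0 ≤ pI s o s')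
    (hγ : γbar = fmax (fun so : S × O => ∑ s' : S, p so.1 so.2 s')) (hγlt : γbar < 1)
    (hγI : γbarI = fmax (fun so : S × O => ∑ s' : S, pI so.1 so.2 s')) (hγIlt : γbarI < 1)
    (hζR : fmax (fun so : S × O => |r so.1 so.2 - rI so.1 so.2|) ≤ ζR)
    (hζP : fmax (fun so : S × O => ∑ s' : S, |p so.1 so.2 s' - pI so.1 so.2 s'|) ≤ ζP)
    (Qstar QI : S → O → ℝ)
    (hQstar : ∀ s o, Qstar s o = r s o + ∑ s' : S, p s o s' * fmax (fun o' => Qstar s' o'))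
    (hQI : ∀ s o, QI s o = rI s o + ∑ s' : S, pI s o s' * fmax (fun o' => QI s' o'))
    (πI : S → O)
    (hgreedy : ∀ s, QI s (πI s) = fmax (fun o => QI s o))
    (VπI : S → ℝ)
    (hVπI : ∀ s, VπI s = r s (πI s) + ∑ s' : S, p s (πI s) s' * VπI s')
    (Vstar : S → ℝ)
    (hVstar : ∀ s, Vstar s = fmax (fun o => Qstar s o)) :
    fmax (fun s : S => |VπI s - Vstar s|) ≤
      2 * ζR / (1 - γbarI) + 2 * Rmax * ζP / ((1 - γbarI) * (1 - γbar)) := by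
  have hr s o : |r s o| ≤ Rmax := abs_le.2 ⟨by linarith [hr0 s o, hrR s o], hrR s o⟩
  have hpγ s o : ∑ s', p s o s' ≤ γbar := hγ ▸ le_fmax (fun so : S × O => ∑ s', p so.1 so.2 s') (s, o)
  have hpIγ s o : ∑ s', pI s o s' ≤ γbarI := hγI ▸ le_fmax (fun so : S × O => ∑ s', pI so.1 so.2 s') (s, o)
  have hrζ s o : |r s o - rI s o| ≤ ζR := fmax_le_iff.1 hζR (s, o)
  have hpζ s o : ∑ s', |p s o s' - pI s o s'| ≤ ζP := fmax_le_iff.1 hζP (s, o)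
  obtain rfl : Vstar = stateValue Qstar := funext hVstar
  have hQerr := norm_sub_optimalQ_le hrζ hpζ hpI hpIγ hγIlt hQstar hQI
    (norm_stateValue_le hr hp hpγ hγlt hQstar)
  have hπerr := norm_policyValue_sub_stateValue_le hrζ hpζ hpI hpIγ hγIlt hQI hgreedy hVπI
    (norm_policyValue_le hr hp hpγ hγlt hVπI)
  refine fmax_le_iff.2 fun s => ?_
  calc |VπI s - stateValue Qstar s|
      ≤ ‖VπI - stateValue QI‖ + ‖stateValue Qstar - stateValue QI‖ :=
        (abs_sub_le _ (stateValue QI s) _).trans <| add_le_add (norm_le_pi_norm (VπI - stateValue QI) s)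
          (by rw [abs_sub_comm]; exact norm_le_pi_norm (stateValue Qstar - stateValue QI) s)
    _ ≤ 2 * ((ζR + ζP * (Rmax / (1 - γbar))) / (1 - γbarI)) := by
        linarith [norm_sub_stateValue_le Qstar QI]
    _ = 2 * ζR / (1 - γbarI) + 2 * Rmax * ζP / ((1 - γbarI) * (1 - γbar)) := by
        field_simp [(by linarith : (1 - γbar) ≠ 0), (by linarith : (1 - γbarI) ≠ 0)]
end
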